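/- Let θ̄ ∈ ℝ^k, and let HD, ID : ℝ^k → ℝ satisfy HD(θ̄) = ID(θ̄) and HD(θ) − ID(θ) = o(‖θ − θ̄‖²) as θ → θ̄ (i.e., for every ε > 0 there is δ > 0 such that ‖θ − θ̄‖ < δ implies |HD(θ) − ID(θ)| ≤ ε‖θ − θ̄‖²). Let θ̂_n : Ω_n → ℝ^k be random vectors such that the laws of √n(θ̂_n − θ̄) converge weakly to the law of some random vector T in ℝ^k. Then n·(HD(θ̂_n) − ID(θ̂_n)) → 0 in probability. -/

import Mathlib

/-!
Weak convergence makes `√n (θ̂ n - θ̄)` bounded in probability: by the portmanteau theorem,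
`limsup P n (‖√n (θ̂ n - θ̄)‖ ≥ R) ≤ Q (‖T‖ ≥ R)`, and the right side is small for large `R` by
continuity from above. On the complementary event `‖√n (θ̂ n - θ̄)‖ < R` we have
`‖θ̂ n - θ̄‖ < R / √n → 0`, so the little-o hypothesis with `ε = c / (R² + 1)` gives
`n |HD - ID| (θ̂ n) ≤ ε ‖√n (θ̂ n - θ̄)‖² < c` for large `n`.
-/

open MeasureTheory Filter Topology
open scoped ENNReal

def BoundedInProbability {ι : Type*} (L : Filter ι) {Ω : ι → Type*} [∀ i, MeasurableSpace (Ω i)]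
    (P : ∀ i, Measure (Ω i)) {E : Type*} [Norm E] (X : ∀ i, Ω i → E) : Prop :=
  ∀ η : ℝ≥0∞, 0 < η → ∃ R : ℝ, ∀ᶠ i in L, P i {ω | R ≤ ‖X i ω‖} < η

section ConvergenceInDistribution

variable {ι : Type*} {L : Filter ι} {Ω : ι → Type*} [∀ i, MeasurableSpace (Ω i)]
  {P : ∀ i, Measure (Ω i)} [∀ i, IsProbabilityMeasure (P i)]
  {Ω' : Type*} [MeasurableSpace Ω'] {Q : Measure Ω'} [IsProbabilityMeasure Q]

theorem limsup_measure_preimage_le_of_forall_integral_tendsto {E : Type*} [MeasurableSpace E]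
    [TopologicalSpace E] [OpensMeasurableSpace E] [HasOuterApproxClosed E]
    {X : ∀ i, Ω i → E} (hX : ∀ i, AEMeasurable (X i) (P i)) {T : Ω' → E} (hT : AEMeasurable T Q)
    (hconv : ∀ f : BoundedContinuousFunction E ℝ,
      Tendsto (fun i => ∫ ω, f (X i ω) ∂(P i)) L (𝓝 (∫ ω, f (T ω) ∂Q)))
    {F : Set E} (hF : IsClosed F) :
    limsup (fun i => P i (X i ⁻¹' F)) L ≤ Q (T ⁻¹' F) := by
  let law : ι → ProbabilityMeasure E := fun i =>
    ⟨(P i).map (X i), Measure.isProbabilityMeasure_map (hX i)⟩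
  let lawT : ProbabilityMeasure E := ⟨Q.map T, Measure.isProbabilityMeasure_map hT⟩
  have hlaw : Tendsto law L (𝓝 lawT) := by
    refine ProbabilityMeasure.tendsto_iff_forall_integral_tendsto.2 fun f => ?_
    simpa only [law, lawT, ProbabilityMeasure.coe_mk,
      integral_map (hX _) f.continuous.aestronglyMeasurable,
      integral_map hT f.continuous.aestronglyMeasurable] using hconv f
  simpa only [law, lawT, ProbabilityMeasure.coe_mk,
    Measure.map_apply_of_aemeasurable (hX _) hF.measurableSet,
    Measure.map_apply_of_aemeasurable hT hF.measurableSet]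
    using ProbabilityMeasure.limsup_measure_closed_le_of_tendsto hlaw hF

variable {E : Type*} [NormedAddCommGroup E] [MeasurableSpace E] [OpensMeasurableSpace E]

theorem tendsto_measure_le_norm_atTop {T : Ω' → E} (hT : AEMeasurable T Q) :
    Tendsto (fun r : ℝ => Q {ω | r ≤ ‖T ω‖}) atTop (𝓝 0) := by
  have hmeas : ∀ r : ℝ, NullMeasurableSet {ω | r ≤ ‖T ω‖} Q := fun r =>
    nullMeasurableSet_le aemeasurable_const hT.norm
  have hanti : Antitone fun r : ℝ => {ω | r ≤ ‖T ω‖} := fun r s hrs ω hω => hrs.trans hω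
  have hempty : (⋂ r : ℝ, {ω | r ≤ ‖T ω‖}) = ∅ := by
    refine Set.eq_empty_of_forall_notMem fun ω hω => ?_
    have : ‖T ω‖ + 1 ≤ ‖T ω‖ := Set.mem_iInter.1 hω (‖T ω‖ + 1)
    linarith
  simpa [hempty, Function.comp_def] using
    tendsto_measure_iInter_atTop hmeas hanti ⟨0, measure_ne_top _ _⟩

theorem boundedInProbability_of_forall_integral_tendsto
    {X : ∀ i, Ω i → E} (hX : ∀ i, AEMeasurable (X i) (P i)) {T : Ω' → E} (hT : AEMeasurable T Q)
    (hconv : ∀ f : BoundedContinuousFunction E ℝ,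
      Tendsto (fun i => ∫ ω, f (X i ω) ∂(P i)) L (𝓝 (∫ ω, f (T ω) ∂Q))) :
    BoundedInProbability L P X := by
  intro η hη
  obtain ⟨R, hR⟩ := ((tendsto_measure_le_norm_atTop hT).eventually (gt_mem_nhds hη)).exists
  exact ⟨R, eventually_lt_of_limsup_lt <|
    (limsup_measure_preimage_le_of_forall_integral_tendsto hX hT hconv
      (isClosed_le continuous_const continuous_norm)).trans_lt hR⟩

end ConvergenceInDistribution

theorem eventually_abs_mul_lt_of_norm_smul_lt {E : Type*} [NormedAddCommGroup E] [NormedSpace ℝ E]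
    {g : E → ℝ} {x₀ : E}
    (hg : ∀ ε : ℝ, 0 < ε → ∃ δ : ℝ, 0 < δ ∧ ∀ x : E, ‖x - x₀‖ < δ → |g x| ≤ ε * ‖x - x₀‖ ^ 2)
    {c : ℝ} (hc : 0 < c) (R : ℝ) :
    ∀ᶠ n : ℕ in atTop, ∀ x : E, ‖Real.sqrt n • (x - x₀)‖ < R → |n * g x| < c := by
  obtain ⟨δ, hδ, hgδ⟩ := hg (c / (R ^ 2 + 1)) (by positivity)
  have hscale : Tendsto (fun n : ℕ => R / Real.sqrt n) atTop (𝓝 0) :=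
    tendsto_const_nhds.div_atTop <| Real.tendsto_sqrt_atTop.comp tendsto_natCast_atTop_atTop
  filter_upwards [eventually_gt_atTop 0, hscale.eventually (gt_mem_nhds hδ)] with n hn hRδ x hx
  have hsqrt : 0 < Real.sqrt n := Real.sqrt_pos.2 (Nat.cast_pos.2 hn)
  have hnorm : ‖Real.sqrt n • (x - x₀)‖ = Real.sqrt n * ‖x - x₀‖ := by
    rw [norm_smul, Real.norm_of_nonneg hsqrt.le]
  have hclose : ‖x - x₀‖ < δ := by
    refine lt_trans ?_ hRδ
    rwa [lt_div_iff₀ hsqrt, mul_comm, ← hnorm]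
  have hR : ‖Real.sqrt n • (x - x₀)‖ ^ 2 < R ^ 2 + 1 := by
    nlinarith [norm_nonneg (Real.sqrt n • (x - x₀))]
  calc |n * g x| = n * |g x| := by rw [abs_mul, Nat.abs_cast]
    _ ≤ n * (c / (R ^ 2 + 1) * ‖x - x₀‖ ^ 2) := by gcongr; exact hgδ x hclose
    _ = c / (R ^ 2 + 1) * ‖Real.sqrt n • (x - x₀)‖ ^ 2 := by
      rw [hnorm, mul_pow, Real.sq_sqrt (Nat.cast_nonneg n)]; ring
    _ < c / (R ^ 2 + 1) * (R ^ 2 + 1) := by gcongr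
    _ = c := div_mul_cancel₀ c (by positivity)

theorem stmt_4_general {k : ℕ} (θbar : EuclideanSpace ℝ (Fin k))
    (HD ID : EuclideanSpace ℝ (Fin k) → ℝ)
    (hlittleo : ∀ ε : ℝ, 0 < ε → ∃ δ : ℝ, 0 < δ ∧
      ∀ θ : EuclideanSpace ℝ (Fin k), ‖θ - θbar‖ < δ → |HD θ - ID θ| ≤ ε * ‖θ - θbar‖ ^ 2)
    {Ω : ℕ → Type*} [∀ n, MeasurableSpace (Ω n)]
    (P : ∀ n, Measure (Ω n)) [∀ n, IsProbabilityMeasure (P n)]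
    (θhat : ∀ n, Ω n → EuclideanSpace ℝ (Fin k)) (hmeas : ∀ n, Measurable (θhat n))
    {Ω' : Type*} [MeasurableSpace Ω'] (Q : Measure Ω') [IsProbabilityMeasure Q]
    (T : Ω' → EuclideanSpace ℝ (Fin k)) (hT : Measurable T)
    (hconv : ∀ f : BoundedContinuousFunction (EuclideanSpace ℝ (Fin k)) ℝ,
      Tendsto (fun n => ∫ ω, f (Real.sqrt n • (θhat n ω - θbar)) ∂(P n)) atTop
        (nhds (∫ ω, f (T ω) ∂Q))) :
    ∀ c : ℝ, 0 < c → Tendsto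
      (fun n => ((P n) {ω | c ≤ |(n : ℝ) * (HD (θhat n ω) - ID (θhat n ω))|}).toReal)
      atTop (nhds 0) := by
  intro c hc
  suffices Tendsto (fun n => P n {ω | c ≤ |(n : ℝ) * (HD (θhat n ω) - ID (θhat n ω))|}) atTop
      (𝓝 0) by
    simpa [Function.comp_def] using (ENNReal.tendsto_toReal ENNReal.zero_ne_top).comp this
  have hbounded : BoundedInProbability atTop P fun n ω => Real.sqrt n • (θhat n ω - θbar) :=
    boundedInProbability_of_forall_integral_tendsto (fun n => by fun_prop) hT.aemeasurable hconv
  refine ENNReal.tendsto_nhds_zero.2 fun η hη => ?_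
  obtain ⟨R, hR⟩ := hbounded η hη
  filter_upwards [hR, eventually_abs_mul_lt_of_norm_smul_lt hlittleo hc R] with n hn hsmall
  exact (measure_mono fun ω hω => not_lt.1 fun h => (hsmall _ h).not_ge hω).trans hn.le

/-- Theorem 2: if `HD(θ̄) = ID(θ̄)` and `HD(θ) - ID(θ) = o(‖θ - θ̄‖²)` as `θ → θ̄`, and the
laws of `√n (θ̂ n - θ̄)` converge weakly, then `n·(HD(θ̂ n) - ID(θ̂ n)) → 0` in probability. -/
theorem stmt_4 {k : ℕ} (θbar : EuclideanSpace ℝ (Fin k))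
    (HD ID : EuclideanSpace ℝ (Fin k) → ℝ) (heq : HD θbar = ID θbar)
    (hlittleo : ∀ ε : ℝ, 0 < ε → ∃ δ : ℝ, 0 < δ ∧
      ∀ θ : EuclideanSpace ℝ (Fin k), ‖θ - θbar‖ < δ → |HD θ - ID θ| ≤ ε * ‖θ - θbar‖ ^ 2)
    {Ω : ℕ → Type*} [∀ n, MeasurableSpace (Ω n)]
    (P : ∀ n, Measure (Ω n)) [∀ n, IsProbabilityMeasure (P n)]
    (θhat : ∀ n, Ω n → EuclideanSpace ℝ (Fin k)) (hmeas : ∀ n, Measurable (θhat n))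
    {Ω' : Type*} [MeasurableSpace Ω'] (Q : Measure Ω') [IsProbabilityMeasure Q]
    (T : Ω' → EuclideanSpace ℝ (Fin k)) (hT : Measurable T)
    (hconv : ∀ f : BoundedContinuousFunction (EuclideanSpace ℝ (Fin k)) ℝ,
      Tendsto (fun n => ∫ ω, f (Real.sqrt n • (θhat n ω - θbar)) ∂(P n)) atTop
        (nhds (∫ ω, f (T ω) ∂Q))) :
    ∀ c : ℝ, 0 < c → Tendsto
      (fun n => ((P n) {ω | c ≤ |(n : ℝ) * (HD (θhat n ω) - ID (θhat n ω))|}).toReal)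
      atTop (nhds 0) :=
  stmt_4_general θbar HD ID hlittleo P θhat hmeas Q T hT hconv
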